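/- arXiv:1511.03730 — 9 statements merged into one kernel-verified Lean document; each statement's English description precedes it below -/
import Mathlib

section
/- Let x_1, ..., x_n be positive real numbers such that their sum equals n and the sum of (x_i - 1)^2 equals α with α ≤ 1. Then the product of the x_i is at most exp(-α/6). -/
open Finset Real

/-- Via `√x`: `log x = 2 log √x ≤ 2 (√x - 1)`, and the remaining polynomial inequality in
`s = √x` reduces to `(s - 1)² (6 - (s + 1)²) ≥ 0`, which holds as long as `x ≤ 2`. -/
lemma log_le_sub_one_sub_sq_div_six {x : ℝ} (hx : 0 < x) (hx2 : x ≤ 2) :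
    log x ≤ (x - 1) - (x - 1) ^ 2 / 6 := by
  set s := √x
  have hs : 0 < s := sqrt_pos.mpr hx
  have hs2 : s ^ 2 = x := sq_sqrt hx.le
  have hlog : log x = 2 * log s := by rw [← hs2, log_pow]; push_cast; ring
  have hlog_s : log s ≤ s - 1 := log_le_sub_one_of_pos hs
  nlinarith [mul_nonneg (sq_nonneg (s - 1)) hs.le, sq_nonneg (s - 1)]

lemma le_exp_sub_one_sub_sq_div_six {x : ℝ} (hx2 : x ≤ 2) :
    x ≤ exp ((x - 1) - (x - 1) ^ 2 / 6) := by
  rcases le_or_gt x 0 with hx | hx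
  · exact hx.trans (exp_pos _).le
  · calc x = exp (log x) := (exp_log hx).symm
      _ ≤ _ := exp_le_exp.mpr (log_le_sub_one_sub_sq_div_six hx hx2)

lemma prod_le_exp_sum_sub_one_sub_sq_div_six {ι : Type*} (s : Finset ι) (x : ι → ℝ)
    (hx : ∀ i ∈ s, 0 ≤ x i) (hx2 : ∀ i ∈ s, x i ≤ 2) :
    ∏ i ∈ s, x i ≤ exp (∑ i ∈ s, ((x i - 1) - (x i - 1) ^ 2 / 6)) := by
  rw [exp_sum]
  exact prod_le_prod hx fun i hi => le_exp_sub_one_sub_sq_div_six (hx2 i hi)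

theorem product_upper_bound_small_alpha (n : ℕ) (x : Fin n → ℝ) (α : ℝ)
    (hx : ∀ i, 0 < x i) (hsum : ∑ i, x i = n)
    (hα : ∑ i, (x i - 1) ^ 2 = α) (hα1 : α ≤ 1) :
    ∏ i, x i ≤ Real.exp (-α / 6) := by
  have hx2 : ∀ i, x i ≤ 2 := fun i => by
    have : (x i - 1) ^ 2 ≤ α :=
      hα ▸ single_le_sum (f := fun j => (x j - 1) ^ 2) (fun j _ => sq_nonneg _) (mem_univ i)
    nlinarith
  have hexponent : ∑ i, ((x i - 1) - (x i - 1) ^ 2 / 6) = -α / 6 := by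
    rw [sum_sub_distrib, sum_sub_distrib, ← sum_div, hα, hsum]
    simp only [sum_const, card_univ, Fintype.card_fin, nsmul_eq_mul, mul_one]
    ring
  calc ∏ i, x i ≤ exp (∑ i, ((x i - 1) - (x i - 1) ^ 2 / 6)) :=
        prod_le_exp_sum_sub_one_sub_sq_div_six _ x (fun i _ => (hx i).le) fun i _ => hx2 i
    _ = exp (-α / 6) := by rw [hexponent]
end

section
/- Let C_1,...,C_m be d_1 × d_1 complex matrices and D_1,...,D_m be d_2 × d_2 complex matrices. Then trace[(∑_i C_i ⊗ D_i)(∑_j C_j† ⊗ D_j†)] ≤ trace[∑_i C_i C_i†] · trace[∑_j D_j D_j†]. -/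
open Matrix
open scoped Kronecker ComplexOrder

/-! `trace (M * Mᴴ)` is the sum of the squared moduli of the entries of `M`, and the entry of
`∑ i, C i ⊗ₖ D i` at `((a, b), (c, d))` is `∑ i, C i a c * D i b d`. Cauchy–Schwarz in the index
`i`, summed over all entries, gives the inequality. -/

theorem norm_sum_mul_sq_le {ι R : Type*} [SeminormedRing R] (s : Finset ι) (x y : ι → R) :
    ‖∑ i ∈ s, x i * y i‖ ^ 2 ≤ (∑ i ∈ s, ‖x i‖ ^ 2) * ∑ i ∈ s, ‖y i‖ ^ 2 :=
  calc ‖∑ i ∈ s, x i * y i‖ ^ 2 ≤ (∑ i ∈ s, ‖x i‖ * ‖y i‖) ^ 2 := by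
        gcongr
        exact (norm_sum_le _ _).trans (Finset.sum_le_sum fun i _ => norm_mul_le _ _)
    _ ≤ (∑ i ∈ s, ‖x i‖ ^ 2) * ∑ i ∈ s, ‖y i‖ ^ 2 := Finset.sum_mul_sq_le_sq_mul_sq _ _ _

namespace Matrix

variable {ι l m n p : Type*} [Fintype ι] [Fintype l] [Fintype m] [Fintype n] [Fintype p]

theorem trace_mul_conjTranspose_self_eq_sum_norm_sq {𝕜 : Type*} [RCLike 𝕜] (M : Matrix m n 𝕜) :
    trace (M * Mᴴ) = ((∑ i, ∑ j, ‖M i j‖ ^ 2 : ℝ) : 𝕜) := by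
  simp [trace, mul_apply, RCLike.mul_conj]

theorem sum_norm_sq_sum_kronecker_le {R : Type*} [SeminormedRing R]
    (C : ι → Matrix l m R) (D : ι → Matrix n p R) :
    ∑ x, ∑ y, ‖(∑ i, C i ⊗ₖ D i) x y‖ ^ 2 ≤
      (∑ i, ∑ a, ∑ c, ‖C i a c‖ ^ 2) * ∑ i, ∑ b, ∑ d, ‖D i b d‖ ^ 2 :=
  calc ∑ x, ∑ y, ‖(∑ i, C i ⊗ₖ D i) x y‖ ^ 2
      ≤ ∑ x : l × n, ∑ y : m × p,
          (∑ i, ‖C i x.1 y.1‖ ^ 2) * ∑ i, ‖D i x.2 y.2‖ ^ 2 := by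
        gcongr with x _ y
        simpa [sum_apply] using
          norm_sum_mul_sq_le Finset.univ (fun i => C i x.1 y.1) (fun i => D i x.2 y.2)
    _ = (∑ i, ∑ a, ∑ c, ‖C i a c‖ ^ 2) * ∑ i, ∑ b, ∑ d, ‖D i b d‖ ^ 2 := by
        simp only [Fintype.sum_prod_type, ← Finset.mul_sum, ← Finset.sum_mul]
        congr 1 <;> exact Finset.sum_comm_cycle

end Matrix

theorem trace_kronecker_cauchy_schwarz (d₁ d₂ m : ℕ)
    (C : Fin m → Matrix (Fin d₁) (Fin d₁) ℂ)
    (D : Fin m → Matrix (Fin d₂) (Fin d₂) ℂ) :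
    Matrix.trace ((∑ i, C i ⊗ₖ D i) * (∑ j, (C j)ᴴ ⊗ₖ (D j)ᴴ)) ≤
      Matrix.trace (∑ i, C i * (C i)ᴴ) * Matrix.trace (∑ j, D j * (D j)ᴴ) := by
  have hK : ∑ j, (C j)ᴴ ⊗ₖ (D j)ᴴ = (∑ i, C i ⊗ₖ D i)ᴴ := by
    simp only [conjTranspose_sum, conjTranspose_kronecker]
  simp only [hK, trace_sum, trace_mul_conjTranspose_self_eq_sum_norm_sq]
  exact_mod_cast sum_norm_sq_sum_kronecker_le C D
end

section
/- Capacity of tensor products is submultiplicative in the normalized sense: if T_1 is a completely positive operator on d_1 × d_1 matrices and T_2 on d_2 × d_2 matrices, then cap(T_1 ⊗ T_2)^{1/(d_1 d_2)} ≤ cap(T_1)^{1/d_1} · cap(T_2)^{1/d_2}. -/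
open Matrix
open scoped Kronecker ComplexOrder

/-- The capacity of the completely positive operator `T(X) = ∑ i, A i * X * (A i)ᴴ`. -/
noncomputable def cap {ι N : Type*} [Fintype ι] [Fintype N] [DecidableEq N]
    (A : ι → Matrix N N ℂ) : ℝ :=
  sInf { r : ℝ | ∃ X : Matrix N N ℂ,
    X.PosDef ∧ X.det = 1 ∧ ((∑ i, A i * X * (A i)ᴴ).det).re = r }

/-!
Product test matrices suffice: if `X, Y ≻ 0` have determinant one, so does `X ⊗ Y`, and
`(T₁ ⊗ T₂)(X ⊗ Y) = T₁(X) ⊗ T₂(Y)` has determinant `det T₁(X) ^ d₂ * det T₂(Y) ^ d₁`.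
Hence `cap (T₁ ⊗ T₂) ≤ cap T₁ ^ d₂ * cap T₂ ^ d₁`, passing to the infimum over `X` and `Y`
by continuity, and taking `(d₁ d₂)`-th roots gives the claim.
-/

theorem le_apply_csInf_csInf {α β γ : Type*}
    [ConditionallyCompleteLinearOrder α] [TopologicalSpace α] [OrderTopology α]
    [ConditionallyCompleteLinearOrder β] [TopologicalSpace β] [OrderTopology β]
    [TopologicalSpace γ] [Preorder γ] [OrderClosedTopology γ]
    {s : Set α} {t : Set β} (hs : s.Nonempty) (hs' : BddBelow s) (ht : t.Nonempty)
    (ht' : BddBelow t) {F : α → β → γ} (hF : Continuous (Function.uncurry F)) {c : γ}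
    (h : ∀ x ∈ s, ∀ y ∈ t, c ≤ F x y) : c ≤ F (sInf s) (sInf t) := by
  have hmem : (sInf s, sInf t) ∈ closure (s ×ˢ t) := by
    rw [closure_prod_eq]
    exact ⟨csInf_mem_closure hs hs', csInf_mem_closure ht ht'⟩
  exact closure_minimal (fun z hz => h _ hz.1 _ hz.2) (isClosed_le continuous_const hF) hmem

theorem Complex.re_pow_mul_pow_of_nonneg {a b : ℂ} (ha : 0 ≤ a) (hb : 0 ≤ b) (p q : ℕ) :
    (a ^ p * b ^ q).re = a.re ^ p * b.re ^ q := by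
  rw [Complex.eq_re_of_ofReal_le (r := 0) (z := a) (by simpa using ha),
    Complex.eq_re_of_ofReal_le (r := 0) (z := b) (by simpa using hb)]
  norm_cast

theorem Matrix.sum_kronecker_sum {ι κ l m n p R : Type*} [NonUnitalNonAssocSemiring R]
    (s : Finset ι) (t : Finset κ) (f : ι → Matrix l m R) (g : κ → Matrix n p R) :
    (∑ i ∈ s, f i) ⊗ₖ (∑ j ∈ t, g j) = ∑ i ∈ s, ∑ j ∈ t, f i ⊗ₖ g j := by
  ext
  simp only [kroneckerMap_apply, sum_apply, Finset.sum_mul_sum]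

section Kraus

variable {ι κ m n : Type*} [Fintype ι] [Fintype κ] [Fintype m] [Fintype n]

def krausMap (A : ι → Matrix m m ℂ) (X : Matrix m m ℂ) : Matrix m m ℂ :=
  ∑ i, A i * X * (A i)ᴴ

theorem Matrix.PosSemidef.krausMap (A : ι → Matrix m m ℂ) {X : Matrix m m ℂ}
    (hX : X.PosSemidef) : (krausMap A X).PosSemidef :=
  posSemidef_sum _ fun i _ => hX.mul_mul_conjTranspose_same (A i)

theorem krausMap_kronecker (A : ι → Matrix m m ℂ) (B : κ → Matrix n n ℂ)
    (X : Matrix m m ℂ) (Y : Matrix n n ℂ) :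
    krausMap (fun p : ι × κ => A p.1 ⊗ₖ B p.2) (X ⊗ₖ Y) = krausMap A X ⊗ₖ krausMap B Y := by
  simp only [krausMap, conjTranspose_kronecker, ← mul_kronecker_mul, Fintype.sum_prod_type,
    sum_kronecker_sum]

variable [DecidableEq m] [DecidableEq n]

/-- `cap A` unfolds to `sInf (capSet A)`. -/
def capSet (A : ι → Matrix m m ℂ) : Set ℝ :=
  { r | ∃ X : Matrix m m ℂ, X.PosDef ∧ X.det = 1 ∧ (krausMap A X).det.re = r }

theorem nonneg_of_mem_capSet {A : ι → Matrix m m ℂ} {r : ℝ} (hr : r ∈ capSet A) : 0 ≤ r := by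
  obtain ⟨X, hX, -, rfl⟩ := hr
  exact (Complex.nonneg_iff.mp (hX.posSemidef.krausMap A).det_nonneg).1

theorem capSet_nonempty (A : ι → Matrix m m ℂ) : (capSet A).Nonempty :=
  ⟨_, 1, PosDef.one, det_one, rfl⟩

theorem bddBelow_capSet (A : ι → Matrix m m ℂ) : BddBelow (capSet A) :=
  ⟨0, fun _ => nonneg_of_mem_capSet⟩

theorem cap_nonneg (A : ι → Matrix m m ℂ) : 0 ≤ cap A :=
  le_csInf (capSet_nonempty A) fun _ => nonneg_of_mem_capSet

theorem pow_mul_pow_mem_capSet_kronecker {A : ι → Matrix m m ℂ} {B : κ → Matrix n n ℂ}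
    {x y : ℝ} (hx : x ∈ capSet A) (hy : y ∈ capSet B) :
    x ^ Fintype.card n * y ^ Fintype.card m ∈ capSet fun p : ι × κ => A p.1 ⊗ₖ B p.2 := by
  obtain ⟨X, hX, hXdet, rfl⟩ := hx
  obtain ⟨Y, hY, hYdet, rfl⟩ := hy
  refine ⟨X ⊗ₖ Y, hX.kronecker hY, by simp [det_kronecker, hXdet, hYdet], ?_⟩
  rw [krausMap_kronecker, det_kronecker]
  exact Complex.re_pow_mul_pow_of_nonneg (hX.posSemidef.krausMap A).det_nonneg
    (hY.posSemidef.krausMap B).det_nonneg _ _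

theorem cap_kronecker_le (A : ι → Matrix m m ℂ) (B : κ → Matrix n n ℂ) :
    cap (fun p : ι × κ => A p.1 ⊗ₖ B p.2) ≤ cap A ^ Fintype.card n * cap B ^ Fintype.card m :=
  le_apply_csInf_csInf (capSet_nonempty A) (bddBelow_capSet A) (capSet_nonempty B)
    (bddBelow_capSet B) (by fun_prop) fun _ hx _ hy =>
      csInf_le (bddBelow_capSet _) (pow_mul_pow_mem_capSet_kronecker hx hy)

end Kraus

theorem cap_tensor_submultiplicative (d₁ d₂ m₁ m₂ : ℕ) (hd₁ : 0 < d₁) (hd₂ : 0 < d₂)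
    (A : Fin m₁ → Matrix (Fin d₁) (Fin d₁) ℂ)
    (B : Fin m₂ → Matrix (Fin d₂) (Fin d₂) ℂ) :
    cap (fun p : Fin m₁ × Fin m₂ => A p.1 ⊗ₖ B p.2) ^ ((1 : ℝ) / (d₁ * d₂)) ≤
      cap A ^ ((1 : ℝ) / d₁) * cap B ^ ((1 : ℝ) / d₂) := by
  have hK := cap_kronecker_le A B
  simp only [Fintype.card_fin] at hK
  have hA := cap_nonneg A
  have hB := cap_nonneg B
  calc cap (fun p : Fin m₁ × Fin m₂ => A p.1 ⊗ₖ B p.2) ^ ((1 : ℝ) / (d₁ * d₂))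
      ≤ (cap A ^ d₂ * cap B ^ d₁) ^ ((1 : ℝ) / (d₁ * d₂)) :=
        Real.rpow_le_rpow (cap_nonneg _) hK (by positivity)
    _ = cap A ^ ((1 : ℝ) / d₁) * cap B ^ ((1 : ℝ) / d₂) := by
        rw [Real.mul_rpow (by positivity) (by positivity), ← Real.rpow_natCast, ← Real.rpow_natCast,
          ← Real.rpow_mul hA, ← Real.rpow_mul hB]
        congr 2 <;> field_simp
end

section
/- Let A be a nonnegative n × n real matrix all of whose row sums equal 1 and whose column sums c_1,...,c_n satisfy ∑ (c_i - 1)² ≤ ε. Then A can be written as A = λB + Z where B is doubly stochastic, Z is entrywise nonnegative, and λ ≥ 1 - √(nε). -/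
/-
Let `s = ∑ⱼ (cⱼ - 1)⁺` be the total excess of the column sums; Cauchy–Schwarz gives
`s ≤ √(n ε)`. A set `S` of rows carries mass `#S`, while the set `T` of columns it meets carries
at most `#T + s`, so for `s < 1` Hall's theorem yields a permutation matrix inside the support of
`A`. Subtracting `m` times it, `m` the least entry of `A` on it, lowers every line sum by `m`,
keeps the excess and shrinks the support; iterating produces `N ≤ A` with all line sums `1 - s`,
and `B = N / (1 - s)`.
-/

open Finset Matrix

lemma sum_posPart_le_sqrt_card_mul_sum_sq {ι : Type*} [Fintype ι] (v : ι → ℝ) :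
    ∑ j, (v j)⁺ ≤ √(Fintype.card ι * ∑ j, v j ^ 2) := by
  have hsq (x : ℝ) : x⁺ ^ 2 ≤ x ^ 2 := by
    rcases le_total 0 x with hx | hx
    · rw [posPart_eq_self.2 hx]
    · rw [posPart_eq_zero.2 hx, zero_pow two_ne_zero]
      positivity
  refine (le_abs_self _).trans (Real.abs_le_sqrt ?_)
  calc (∑ j, (v j)⁺) ^ 2 ≤ Fintype.card ι * ∑ j, (v j)⁺ ^ 2 := sq_sum_le_card_mul_sum_sq
    _ ≤ Fintype.card ι * ∑ j, v j ^ 2 := by gcongr _ * ?_; exact sum_le_sum fun j _ => hsq (v j)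

namespace Matrix

variable {R n : Type*} [Fintype n]

def colExcess [AddCommGroup R] [Lattice R] (M : Matrix n n R) (ρ : R) : R :=
  ∑ j, (∑ i, M i j - ρ)⁺

section Ring

variable [Ring R] [DecidableEq n]

lemma sum_row_smul_permMatrix (σ : Equiv.Perm n) (m : R) (i : n) :
    ∑ j, (m • σ.permMatrix R) i j = m := by
  simp [Equiv.toPEquiv_apply]

lemma sum_col_smul_permMatrix (σ : Equiv.Perm n) (m : R) (j : n) :
    ∑ i, (m • σ.permMatrix R) i j = m := by
  simp [Equiv.toPEquiv_apply, ← σ.eq_symm_apply]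

lemma card_support_sub_smul_permMatrix_lt [DecidableEq R] {M : Matrix n n R} {σ : Equiv.Perm n}
    (hσ : ∀ i, M i (σ i) ≠ 0) (i₀ : n) :
    #{p : n × n | (M - M i₀ (σ i₀) • σ.permMatrix R) p.1 p.2 ≠ 0} <
      #{p : n × n | M p.1 p.2 ≠ 0} := by
  refine card_lt_card ((ssubset_iff_of_subset fun p => ?_).2 ⟨(i₀, σ i₀), ?_, ?_⟩)
  · simp only [mem_filter_univ]
    intro hp hMp
    have hσp : σ p.1 ≠ p.2 := fun h => hσ p.1 (h ▸ hMp)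
    exact hp (by simp [hMp, hσp, Equiv.toPEquiv_apply])
  · simpa using hσ i₀
  · simp [Equiv.toPEquiv_apply]

lemma colExcess_sub_smul_permMatrix [Lattice R] (M : Matrix n n R) (ρ m : R) (σ : Equiv.Perm n) :
    colExcess (M - m • σ.permMatrix R) (ρ - m) = colExcess M ρ := by
  refine sum_congr rfl fun j _ => ?_
  rw [← sub_sub_sub_cancel_right _ ρ m]
  simp only [sub_apply, sum_sub_distrib, sum_col_smul_permMatrix]

end Ring

section LinearOrderedField

variable [Field R] [LinearOrder R] [IsStrictOrderedRing R]

lemma colExcess_nonneg (M : Matrix n n R) (ρ : R) : 0 ≤ colExcess M ρ :=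
  sum_nonneg fun _ _ => posPart_nonneg _

lemma sum_sum_le_card_mul_add_colExcess (M : Matrix n n R) (ρ : R) (T : Finset n) :
    ∑ j ∈ T, ∑ i, M i j ≤ #T * ρ + colExcess M ρ :=
  calc ∑ j ∈ T, ∑ i, M i j ≤ ∑ j ∈ T, (ρ + (∑ i, M i j - ρ)⁺) :=
        sum_le_sum fun j _ => by linarith [le_posPart (∑ i, M i j - ρ)]
    _ = #T * ρ + ∑ j ∈ T, (∑ i, M i j - ρ)⁺ := by
        rw [sum_add_distrib, sum_const, nsmul_eq_mul]
    _ ≤ #T * ρ + colExcess M ρ := by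
        gcongr
        exact sum_le_sum_of_subset_of_nonneg (subset_univ T) fun _ _ _ => posPart_nonneg _

variable [DecidableEq n]

lemma exists_perm_forall_pos_of_colExcess_lt {M : Matrix n n R} {ρ : R}
    (hM : ∀ i j, 0 ≤ M i j) (hrow : ∀ i, ∑ j, M i j = ρ) (hlt : colExcess M ρ < ρ) :
    ∃ σ : Equiv.Perm n, ∀ i, 0 < M i (σ i) := by
  have hρ : 0 < ρ := (colExcess_nonneg M ρ).trans_lt hlt
  let supp (i : n) : Finset n := {j | 0 < M i j}
  have hall (S : Finset n) : #S ≤ #(S.biUnion supp) := by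
    set T := S.biUnion supp
    have hrowT : ∀ i ∈ S, ∑ j ∈ T, M i j = ρ := fun i hi => by
      rw [← hrow i]
      refine sum_subset (subset_univ T) fun j _ hj => le_antisymm ?_ (hM i j)
      by_contra! hpos
      exact hj (mem_biUnion.2 ⟨i, hi, by simpa [supp] using hpos⟩)
    have hlt : (#S : R) * ρ < (#T + 1) * ρ :=
      calc (#S : R) * ρ = ∑ i ∈ S, ∑ j ∈ T, M i j := by
            rw [sum_congr rfl hrowT, sum_const, nsmul_eq_mul]
        _ ≤ ∑ i, ∑ j ∈ T, M i j :=
            sum_le_sum_of_subset_of_nonneg (subset_univ S) fun i _ _ =>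
              sum_nonneg fun j _ => hM i j
        _ = ∑ j ∈ T, ∑ i, M i j := sum_comm
        _ ≤ #T * ρ + colExcess M ρ := sum_sum_le_card_mul_add_colExcess M ρ T
        _ < (#T + 1) * ρ := by linarith
    exact_mod_cast Nat.lt_succ_iff.1 (by exact_mod_cast lt_of_mul_lt_mul_right hlt hρ.le)
  obtain ⟨f, hf, hfsupp⟩ := (all_card_le_biUnion_card_iff_exists_injective supp).1 hall
  exact ⟨Equiv.ofBijective f (Finite.injective_iff_bijective.1 hf),
    fun i => by simpa [supp] using hfsupp i⟩

lemma exists_le_of_le_sub_colExcess {M : Matrix n n R} {ρ t : R}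
    (hM : ∀ i j, 0 ≤ M i j) (hrow : ∀ i, ∑ j, M i j = ρ) (ht0 : 0 ≤ t)
    (ht : t ≤ ρ - colExcess M ρ) :
    ∃ N : Matrix n n R, (∀ i j, 0 ≤ N i j ∧ N i j ≤ M i j) ∧
      (∀ i, ∑ j, N i j = t) ∧ ∀ j, ∑ i, N i j = t := by
  rcases isEmpty_or_nonempty n with hn | hn
  · exact ⟨0, isEmptyElim, isEmptyElim, isEmptyElim⟩
  induction hd : #{p : n × n | M p.1 p.2 ≠ 0} using Nat.strong_induction_on
    generalizing M ρ t with
  | _ d ih =>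
  rcases ht0.eq_or_lt with rfl | htpos
  · exact ⟨0, fun i j => ⟨le_rfl, hM i j⟩, by simp, by simp⟩
  obtain ⟨σ, hσ⟩ := exists_perm_forall_pos_of_colExcess_lt hM hrow (by linarith)
  obtain ⟨i₀, -, hi₀⟩ := exists_min_image univ (fun i => M i (σ i)) univ_nonempty
  set m := M i₀ (σ i₀)
  have hP := permMatrix_mem_doublyStochastic (σ := σ) (R := R)
  have hmP (i j : n) : m * σ.permMatrix R i j ≤ M i j := by
    by_cases h : σ i = j
    · simpa [h, Equiv.toPEquiv_apply] using h ▸ hi₀ i (mem_univ i)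
    · simpa [h, Equiv.toPEquiv_apply] using hM i j
  by_cases htm : t ≤ m
  · refine ⟨t • σ.permMatrix R, fun i j => ⟨?_, ?_⟩, fun i => ?_, fun j => ?_⟩
    · exact mul_nonneg ht0 (nonneg_of_mem_doublyStochastic hP)
    · exact (mul_le_mul_of_nonneg_right htm (nonneg_of_mem_doublyStochastic hP)).trans (hmP i j)
    · exact sum_row_smul_permMatrix σ t i
    · exact sum_col_smul_permMatrix σ t j
  rw [not_le] at htm
  have hsupp := card_support_sub_smul_permMatrix_lt (fun i => (hσ i).ne') i₀
  obtain ⟨N, hNM, hNrow, hNcol⟩ := ih _ (hd ▸ hsupp) (M := M - m • σ.permMatrix R)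
    (ρ := ρ - m) (t := t - m) (fun i j => by simpa using hmP i j)
    (fun i => by simp only [sub_apply, sum_sub_distrib, hrow, sum_row_smul_permMatrix])
    (by linarith) (by rw [colExcess_sub_smul_permMatrix]; linarith) rfl
  refine ⟨N + m • σ.permMatrix R, fun i j => ⟨?_, ?_⟩, fun i => ?_, fun j => ?_⟩
  · exact add_nonneg (hNM i j).1 (mul_nonneg (hσ i₀).le (nonneg_of_mem_doublyStochastic hP))
  · simpa [le_sub_iff_add_le] using (hNM i j).2
  · simp only [add_apply, sum_add_distrib, hNrow, sum_row_smul_permMatrix, sub_add_cancel]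
  · simp only [add_apply, sum_add_distrib, hNcol, sum_col_smul_permMatrix, sub_add_cancel]

lemma exists_mem_doublyStochastic_smul_le {M : Matrix n n R} {ρ t : R}
    (hM : ∀ i j, 0 ≤ M i j) (hrow : ∀ i, ∑ j, M i j = ρ) (ht0 : 0 ≤ t)
    (ht : t ≤ ρ - colExcess M ρ) :
    ∃ B ∈ doublyStochastic R n, ∀ i j, t * B i j ≤ M i j := by
  obtain ⟨N, hNM, hNrow, hNcol⟩ := exists_le_of_le_sub_colExcess hM hrow ht0 ht
  obtain ⟨B, hB, rfl⟩ :=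
    (exists_mem_doublyStochastic_eq_smul_iff ht0).2 ⟨fun i j => (hNM i j).1, hNrow, hNcol⟩
  exact ⟨B, hB, fun i j => (hNM i j).2⟩

end LinearOrderedField

end Matrix

theorem almost_doubly_stochastic_decomposition_general (n : ℕ) (ε : ℝ)
    (A : Matrix (Fin n) (Fin n) ℝ)
    (hpos : ∀ i j, 0 ≤ A i j)
    (hrow : ∀ i, ∑ j, A i j = 1)
    (hcol : ∑ j, ((∑ i, A i j) - 1) ^ 2 ≤ ε) :
    ∃ (l : ℝ) (B Z : Matrix (Fin n) (Fin n) ℝ),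
      (∀ i j, 0 ≤ B i j) ∧ (∀ i, ∑ j, B i j = 1) ∧ (∀ j, ∑ i, B i j = 1) ∧
      (∀ i j, 0 ≤ Z i j) ∧ A = l • B + Z ∧ 1 - Real.sqrt (n * ε) ≤ l := by
  set s := colExcess A 1
  have hs : s ≤ √(n * ε) := (sum_posPart_le_sqrt_card_mul_sum_sq _).trans <| by
    simp only [Fintype.card_fin]; gcongr
  suffices ∃ l, 1 - s ≤ l ∧ ∃ B ∈ doublyStochastic ℝ (Fin n), ∀ i j, l * B i j ≤ A i j by
    obtain ⟨l, hl, B, hB, hBA⟩ := this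
    obtain ⟨hB0, hBrow, hBcol⟩ := mem_doublyStochastic_iff_sum.1 hB
    exact ⟨l, B, A - l • B, hB0, hBrow, hBcol, fun i j => by simpa using hBA i j,
      (add_sub_cancel _ _).symm, by linarith⟩
  rcases le_total s 1 with hs1 | hs1
  · exact ⟨1 - s, le_rfl, exists_mem_doublyStochastic_smul_le hpos hrow (sub_nonneg.2 hs1) le_rfl⟩
  · exact ⟨0, by linarith, 1, one_mem _, by simpa using hpos⟩

theorem almost_doubly_stochastic_decomposition (n : ℕ) (ε : ℝ) (hε : 0 ≤ ε)
    (A : Matrix (Fin n) (Fin n) ℝ)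
    (hpos : ∀ i j, 0 ≤ A i j)
    (hrow : ∀ i, ∑ j, A i j = 1)
    (hcol : ∑ j, ((∑ i, A i j) - 1) ^ 2 ≤ ε) :
    ∃ (l : ℝ) (B Z : Matrix (Fin n) (Fin n) ℝ),
      (∀ i j, 0 ≤ B i j) ∧ (∀ i, ∑ j, B i j = 1) ∧ (∀ j, ∑ i, B i j = 1) ∧
      (∀ i j, 0 ≤ Z i j) ∧ A = l • B + Z ∧ 1 - Real.sqrt (n * ε) ≤ l :=
  almost_doubly_stochastic_decomposition_general n ε A hpos hrow hcol
end

section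
/- If B is an n × n doubly stochastic matrix and x ∈ ℝ^n is a positive vector with ∏ x_i = 1, then ∏_{i=1}^n (Bx)_i ≥ 1. -/
open Matrix

theorem prod_mulVec_ge_one_of_doublyStochastic (n : ℕ) (B : Matrix (Fin n) (Fin n) ℝ)
    (hpos : ∀ i j, 0 ≤ B i j)
    (hrow : ∀ i, ∑ j, B i j = 1)
    (hcol : ∀ j, ∑ i, B i j = 1)
    (x : Fin n → ℝ) (hx : ∀ i, 0 < x i) (hprod : ∏ i, x i = 1) :
    1 ≤ ∏ i, (B.mulVec x) i := by
  have key : ∀ i, ∏ j, x j ^ B i j ≤ (B.mulVec x) i := by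
    intro i
    simpa [Matrix.mulVec, dotProduct] using
      Real.geom_mean_le_arith_mean_weighted Finset.univ (B i) x
        (fun j _ => hpos i j) (hrow i) (fun j _ => (hx j).le)
  calc (1:ℝ) = ∏ i, ∏ j, x j ^ B i j := by
        rw [Finset.prod_comm]
        have : ∀ j, ∏ i, x j ^ B i j = x j := by
          intro j
          rw [← Real.rpow_sum_of_pos (hx j), hcol j, Real.rpow_one]
        rw [Finset.prod_congr rfl fun j _ => this j, hprod]
    _ ≤ ∏ i, (B.mulVec x) i := by
        apply Finset.prod_le_prod
        · intro i _
          exact Finset.prod_nonneg fun j _ => Real.rpow_nonneg (hx j).le _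
        · intro i _
          exact key i
end

section
/- Let A be a nonnegative n × n matrix whose row sums all equal 1 and whose column sums c_1,...,c_n satisfy ∑ (c_i - 1)² ≤ ε. Then cap(A) ≥ (1 - √(nε))^n, where cap(A) = inf { ∏_i (Ax)_i : x > 0, ∏_i x_i = 1 }. -/
/-!
Sort `x` increasingly, permuting the columns of `A` accordingly, and put `β = 1 - √(nε)`.
For a row `r` with tail sums `R m = ∑_{k ≥ m} r k`, the weights
`p k = min 1 (R k / β) - min 1 (R (k+1) / β)` form a probability vector with `β p ≤ r`, so
weighted AM-GM gives `(Ax)_i ≥ β ∏_k x_k ^ p_ik`. By Cauchy-Schwarz every set of `s` columns of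
`A` has total mass at least `s - √(nε)`, which makes the tail sums of the column sums `w` of `p`
dominate those of the all-ones vector. As `log x` is increasing with sum `0`, Abel summation
gives `∑ w_k log x_k ≥ 0`, hence `∏_i (Ax)_i ≥ β ^ n`.
-/

open Matrix

/-- The capacity of a nonnegative matrix. -/
noncomputable def matrixCap {n : ℕ} (A : Matrix (Fin n) (Fin n) ℝ) : ℝ :=
  sInf { r : ℝ | ∃ x : Fin n → ℝ,
    (∀ i, 0 < x i) ∧ ∏ i, x i = 1 ∧ ∏ i, (A.mulVec x) i = r }

open Finset

section TailSum

variable {n : ℕ}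

def tailSum {M : Type*} [AddCommMonoid M] (r : Fin n → M) (m : ℕ) : M :=
  ∑ j : Fin n with m ≤ j.val, r j

section AddCommMonoid

variable {M : Type*} [AddCommMonoid M]

theorem tailSum_zero (r : Fin n → M) : tailSum r 0 = ∑ j, r j := by
  simp [tailSum]

theorem tailSum_of_le (r : Fin n → M) {m : ℕ} (hm : n ≤ m) : tailSum r m = 0 :=
  sum_eq_zero fun j hj => absurd (mem_filter.1 hj).2 (by omega)

theorem tailSum_eq_add_tailSum_succ (r : Fin n → M) {m : ℕ} (hm : m < n) :
    tailSum r m = r ⟨m, hm⟩ + tailSum r (m + 1) := by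
  have : univ.filter (fun j : Fin n => m ≤ j.val) =
      insert ⟨m, hm⟩ (univ.filter fun j : Fin n => m + 1 ≤ j.val) := by
    ext j
    simp only [mem_filter, mem_univ, true_and, mem_insert, Fin.ext_iff]
    omega
  rw [tailSum, this, sum_insert (by simp)]
  rfl

theorem tailSum_comp_succ (r : Fin (n + 1) → M) (m : ℕ) :
    tailSum (fun j => r j.succ) m = tailSum r (m + 1) := by
  simp [tailSum, sum_filter, Fin.sum_univ_succ]

end AddCommMonoid

theorem tailSum_sub_succ {M : Type*} [AddCommGroup M] {m : ℕ} (f : ℕ → M) (hm : m ≤ n) :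
    tailSum (fun k : Fin n => f k - f (k + 1)) m = f m - f n := by
  induction hm using Nat.decreasingInduction with
  | self => simp [tailSum_of_le]
  | of_succ k hk ih => rw [tailSum_eq_add_tailSum_succ _ hk, ih]; abel

theorem tailSum_succ_le {r : Fin n → ℝ} (hr : ∀ j, 0 ≤ r j) (m : ℕ) :
    tailSum r (m + 1) ≤ tailSum r m :=
  sum_le_sum_of_subset_of_nonneg (monotone_filter_right _ fun j h => by omega)
    fun j _ _ => hr j

theorem tailSum_le_sum {r : Fin n → ℝ} (hr : ∀ j, 0 ≤ r j) (m : ℕ) :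
    tailSum r m ≤ ∑ j, r j :=
  sum_le_sum_of_subset_of_nonneg (filter_subset _ _) fun j _ _ => hr j

theorem le_sum_mul_of_tailSum_nonneg {e u : Fin n → ℝ} (hu : Monotone u)
    (he : ∀ m, 0 ≤ tailSum e m) {c : ℝ} (hc : ∀ k, c ≤ u k) :
    (∑ k, e k) * c ≤ ∑ k, e k * u k := by
  induction n generalizing c with
  | zero => simp
  | succ n ih =>
    have htail : (∑ k : Fin n, e k.succ) * u 0 ≤ ∑ k : Fin n, e k.succ * u k.succ :=
      ih (hu.comp Fin.strictMono_succ.monotone)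
        (fun m => tailSum_comp_succ e m ▸ he (m + 1)) fun k => hu (Fin.zero_le _)
    have hsum : 0 ≤ ∑ k, e k := tailSum_zero e ▸ he 0
    calc (∑ k, e k) * c ≤ (∑ k, e k) * u 0 := mul_le_mul_of_nonneg_left (hc 0) hsum
      _ = e 0 * u 0 + (∑ k : Fin n, e k.succ) * u 0 := by rw [Fin.sum_univ_succ, add_mul]
      _ ≤ e 0 * u 0 + ∑ k : Fin n, e k.succ * u k.succ := by gcongr
      _ = ∑ k, e k * u k := (Fin.sum_univ_succ fun k => e k * u k).symm

theorem sum_mul_le_sum_mul_of_tailSum_le {u v w : Fin n → ℝ} (hu : Monotone u)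
    (h : ∀ m, tailSum v m ≤ tailSum w m) (hsum : ∑ k, v k = ∑ k, w k) :
    ∑ k, v k * u k ≤ ∑ k, w k * u k := by
  obtain _ | n := n
  · simp
  have he : ∀ m, 0 ≤ tailSum (w - v) m := fun m => by
    simpa [tailSum, sum_sub_distrib] using h m
  have := le_sum_mul_of_tailSum_nonneg hu he (c := u 0) fun k => hu (Fin.zero_le k)
  simp only [Pi.sub_apply, sum_sub_distrib, hsum, sub_self, zero_mul, sub_mul] at this
  linarith

theorem one_le_prod_rpow_of_tailSum_le {x w : Fin n → ℝ} (hx : ∀ k, 0 < x k)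
    (hmono : Monotone x) (hprod : ∏ k, x k = 1)
    (h : ∀ m, tailSum (fun _ : Fin n => (1 : ℝ)) m ≤ tailSum w m) (hsum : ∑ k, w k = n) :
    1 ≤ ∏ k, x k ^ w k := by
  have hlog : Monotone fun k => Real.log (x k) := fun a b hab =>
    Real.log_le_log (hx a) (hmono hab)
  have hmaj := sum_mul_le_sum_mul_of_tailSum_le hlog h (by simp [hsum])
  rw [sum_congr rfl fun k _ => one_mul _, ← Real.log_prod fun k _ => (hx k).ne', hprod,
    Real.log_one] at hmaj
  calc (1 : ℝ) = Real.exp 0 := Real.exp_zero.symm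
    _ ≤ Real.exp (∑ k, w k * Real.log (x k)) := Real.exp_le_exp.2 hmaj
    _ = ∏ k, x k ^ w k := by
      rw [Real.exp_sum]
      exact prod_congr rfl fun k _ => by rw [Real.rpow_def_of_pos (hx k), mul_comm]

end TailSum

theorem card_sub_sqrt_le_sum {ι : Type*} [Fintype ι] {c : ι → ℝ} {ε : ℝ}
    (hc : ∑ j, (c j - 1) ^ 2 ≤ ε) (S : Finset ι) :
    (#S : ℝ) - √(Fintype.card ι * ε) ≤ ∑ j ∈ S, c j := by
  have hsq : (∑ j ∈ S, (c j - 1)) ^ 2 ≤ Fintype.card ι * ε :=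
    calc (∑ j ∈ S, (c j - 1)) ^ 2 ≤ #S * ∑ j ∈ S, (c j - 1) ^ 2 := sq_sum_le_card_mul_sum_sq
      _ ≤ Fintype.card ι * ε := by
        gcongr
        · exact_mod_cast card_le_univ S
        · exact (sum_le_sum_of_subset_of_nonneg (subset_univ S) fun j _ _ => sq_nonneg _).trans hc
  have hlow : -√(Fintype.card ι * ε) ≤ ∑ j ∈ S, (c j - 1) :=
    (neg_le_neg (Real.abs_le_sqrt hsq)).trans (neg_abs_le _)
  rw [sum_sub_distrib, sum_const, nsmul_one] at hlow
  linarith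

theorem natCast_le_sum_min_one_div {ι : Type*} [Fintype ι] {a : ι → ℝ} {δ : ℝ} {k : ℕ}
    (ha : ∀ i, 0 ≤ a i ∧ a i ≤ 1) (hδ0 : 0 ≤ δ) (hδ1 : δ < 1) (hk : k - δ ≤ ∑ i, a i) :
    (k : ℝ) ≤ ∑ i, min 1 (a i / (1 - δ)) := by
  set β := 1 - δ
  have hβ : 0 < β := by simp only [β]; linarith
  set T := univ.filter fun i => β ≤ a i
  have hsplit : ∀ i, a i ≤ β * min 1 (a i / β) + δ * if β ≤ a i then 1 else 0 := by
    intro i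
    split_ifs with hi
    · rw [min_eq_left ((one_le_div hβ).2 hi)]; linarith [(ha i).2]
    · rw [min_eq_right ((div_le_one hβ).2 (le_of_not_ge hi)), mul_div_cancel₀ _ hβ.ne']; simp
  have hT : ∀ i, (if β ≤ a i then 1 else 0 : ℝ) ≤ min 1 (a i / β) := by
    intro i
    split_ifs with hi
    · rw [min_eq_left ((one_le_div hβ).2 hi)]
    · exact le_min zero_le_one (div_nonneg (ha i).1 hβ.le)
  have hsum : ∑ i, a i ≤ β * ∑ i, min 1 (a i / β) + δ * #T := by
    have := sum_le_sum fun i (_ : i ∈ univ) => hsplit i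
    rw [sum_add_distrib, ← mul_sum, ← mul_sum, sum_boole] at this
    exact this
  have hTle : (#T : ℝ) ≤ ∑ i, min 1 (a i / β) := by
    simpa [sum_boole] using sum_le_sum fun i (_ : i ∈ univ) => hT i
  -- if the clipped sum were below `k`, then `#T ≤ k - 1` and `hsum` would force it up to `k`
  by_contra! hlt
  have hTk : (#T : ℝ) + 1 ≤ k := by exact_mod_cast (Nat.cast_lt.1 (hTle.trans_lt hlt))
  nlinarith

section ClippedTailWeights

variable {n : ℕ} {β : ℝ} {r : Fin n → ℝ}

noncomputable def clippedTailWeights (β : ℝ) (r : Fin n → ℝ) (k : Fin n) : ℝ :=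
  min 1 (tailSum r k / β) - min 1 (tailSum r (k + 1) / β)

theorem tailSum_clippedTailWeights (β : ℝ) (r : Fin n → ℝ) (m : ℕ) :
    tailSum (clippedTailWeights β r) m = min 1 (tailSum r m / β) := by
  rcases le_or_gt m n with hm | hm
  · exact (tailSum_sub_succ (fun m => min 1 (tailSum r m / β)) hm).trans
      (by simp [tailSum_of_le r le_rfl])
  · simp [tailSum_of_le _ hm.le]

theorem sum_clippedTailWeights (hβ : 0 < β) (hβ1 : β ≤ 1) (hr : ∑ j, r j = 1) :
    ∑ k, clippedTailWeights β r k = 1 := by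
  rw [← tailSum_zero, tailSum_clippedTailWeights, tailSum_zero, hr]
  exact min_eq_left (one_le_one_div hβ hβ1)

theorem clippedTailWeights_nonneg (hβ : 0 ≤ β) (hr : ∀ j, 0 ≤ r j) (k : Fin n) :
    0 ≤ clippedTailWeights β r k :=
  sub_nonneg.2 <| min_le_min_left _ <| div_le_div_of_nonneg_right (tailSum_succ_le hr k) hβ

theorem mul_clippedTailWeights_le (hβ : 0 < β) (hr : ∀ j, 0 ≤ r j) (k : Fin n) :
    β * clippedTailWeights β r k ≤ r k := by
  have hrk : 0 ≤ r k / β := div_nonneg (hr k) hβ.le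
  have : min 1 (tailSum r k / β) ≤ min 1 (tailSum r (k + 1) / β) + r k / β := by
    rw [tailSum_eq_add_tailSum_succ r k.isLt, add_div]
    simp only [min_def]
    split_ifs <;> linarith
  rw [clippedTailWeights, ← le_div_iff₀' hβ]
  linarith

end ClippedTailWeights

theorem mul_prod_rpow_le_sum_mul {ι : Type*} [Fintype ι] {p r y : ι → ℝ} {β : ℝ}
    (hβ : 0 ≤ β) (hp : ∀ i, 0 ≤ p i) (hp1 : ∑ i, p i = 1) (hpr : ∀ i, β * p i ≤ r i)
    (hy : ∀ i, 0 ≤ y i) :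
    β * ∏ i, y i ^ p i ≤ ∑ i, r i * y i :=
  calc β * ∏ i, y i ^ p i
      ≤ β * ∑ i, p i * y i := by
        gcongr
        exact Real.geom_mean_le_arith_mean_weighted _ _ _ (fun i _ => hp i) hp1 fun i _ => hy i
    _ = ∑ i, β * p i * y i := by rw [mul_sum]; simp only [mul_assoc]
    _ ≤ ∑ i, r i * y i := by gcongr with i; exacts [hy i, hpr i]

section Capacity

variable {n : ℕ} {A : Matrix (Fin n) (Fin n) ℝ} {δ : ℝ}

theorem tailSum_one_le_tailSum_sum_clippedTailWeights (hpos : ∀ i j, 0 ≤ A i j)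
    (hrow : ∀ i, ∑ j, A i j = 1) (hδ0 : 0 ≤ δ) (hδ1 : δ < 1)
    (hcol : ∀ S : Finset (Fin n), #S - δ ≤ ∑ j ∈ S, ∑ i, A i j) (m : ℕ) :
    tailSum (fun _ : Fin n => (1 : ℝ)) m ≤
      tailSum (fun k => ∑ i, clippedTailWeights (1 - δ) (A i) k) m := by
  have hrows : ∀ i, 0 ≤ tailSum (A i) m ∧ tailSum (A i) m ≤ 1 := fun i =>
    ⟨sum_nonneg fun j _ => hpos i j, hrow i ▸ tailSum_le_sum (hpos i) m⟩
  calc tailSum (fun _ : Fin n => (1 : ℝ)) m = #(univ.filter fun j : Fin n => m ≤ j.val) := by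
        simp [tailSum]
    _ ≤ ∑ i, min 1 (tailSum (A i) m / (1 - δ)) :=
        natCast_le_sum_min_one_div hrows hδ0 hδ1 ((hcol _).trans_eq sum_comm)
    _ = tailSum (fun k => ∑ i, clippedTailWeights (1 - δ) (A i) k) m := by
        simp only [← tailSum_clippedTailWeights]
        exact sum_comm

theorem pow_le_prod_mulVec_of_monotone (hpos : ∀ i j, 0 ≤ A i j) (hrow : ∀ i, ∑ j, A i j = 1)
    (hδ0 : 0 ≤ δ) (hδ1 : δ < 1) (hcol : ∀ S : Finset (Fin n), #S - δ ≤ ∑ j ∈ S, ∑ i, A i j)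
    {x : Fin n → ℝ} (hx : ∀ j, 0 < x j) (hmono : Monotone x) (hprod : ∏ j, x j = 1) :
    (1 - δ) ^ n ≤ ∏ i, (A *ᵥ x) i := by
  set β := 1 - δ
  have hβ : 0 < β := by simp only [β]; linarith
  set p := fun i => clippedTailWeights β (A i)
  have hp1 : ∀ i, ∑ k, p i k = 1 := fun i =>
    sum_clippedTailWeights hβ (by simp only [β]; linarith) (hrow i)
  have hrowbound : ∀ i, β * ∏ k, x k ^ p i k ≤ (A *ᵥ x) i := fun i =>
    mul_prod_rpow_le_sum_mul hβ.le (clippedTailWeights_nonneg hβ.le (hpos i)) (hp1 i)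
      (mul_clippedTailWeights_le hβ (hpos i)) fun k => (hx k).le
  have hmaj : 1 ≤ ∏ k, x k ^ ∑ i, p i k :=
    one_le_prod_rpow_of_tailSum_le hx hmono hprod
      (tailSum_one_le_tailSum_sum_clippedTailWeights hpos hrow hδ0 hδ1 hcol)
      (by rw [sum_comm]; simp [hp1])
  calc β ^ n ≤ β ^ n * ∏ k, x k ^ ∑ i, p i k := le_mul_of_one_le_right (by positivity) hmaj
    _ = ∏ i, β * ∏ k, x k ^ p i k := by
      simp only [Real.rpow_sum_of_pos (hx _), prod_mul_distrib, prod_const, card_univ,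
        Fintype.card_fin]
      rw [prod_comm]
    _ ≤ ∏ i, (A *ᵥ x) i :=
      prod_le_prod
        (fun i _ => mul_nonneg hβ.le <| prod_nonneg fun k _ => Real.rpow_nonneg (hx k).le _)
        fun i _ => hrowbound i

theorem pow_le_prod_mulVec (hpos : ∀ i j, 0 ≤ A i j) (hrow : ∀ i, ∑ j, A i j = 1)
    (hδ0 : 0 ≤ δ) (hδ1 : δ ≤ 1) (hcol : ∀ S : Finset (Fin n), #S - δ ≤ ∑ j ∈ S, ∑ i, A i j)
    {x : Fin n → ℝ} (hx : ∀ j, 0 < x j) (hprod : ∏ j, x j = 1) :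
    (1 - δ) ^ n ≤ ∏ i, (A *ᵥ x) i := by
  rcases hδ1.lt_or_eq with hδ1 | rfl
  · set σ := Tuple.sort x
    have := pow_le_prod_mulVec_of_monotone (A := A.submatrix id σ) (x := x ∘ σ)
      (fun i j => hpos i (σ j)) (fun i => (Equiv.sum_comp σ (A i)).trans (hrow i)) hδ0 hδ1
      (fun S => by simpa [sum_map] using hcol (S.map σ.toEmbedding))
      (fun j => hx (σ j)) (Tuple.monotone_sort x) (by rw [← hprod]; exact Equiv.prod_comp σ x)
    simpa [submatrix_mulVec_equiv, Function.comp_assoc] using this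
  · obtain _ | n := n
    · simp
    · rw [sub_self, zero_pow n.succ_ne_zero]
      exact prod_nonneg fun i _ => by
        simp only [mulVec, dotProduct]
        exact sum_nonneg fun j _ => mul_nonneg (hpos i j) (hx j).le

end Capacity

theorem cap_almost_doubly_stochastic_general (n : ℕ) (ε : ℝ) (hε' : ε ≤ 1 / n)
    (A : Matrix (Fin n) (Fin n) ℝ)
    (hpos : ∀ i j, 0 ≤ A i j)
    (hrow : ∀ i, ∑ j, A i j = 1)
    (hcol : ∑ j, ((∑ i, A i j) - 1) ^ 2 ≤ ε) :
    (1 - Real.sqrt (n * ε)) ^ n ≤ matrixCap A := by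
  have hnε : (n : ℝ) * ε ≤ 1 :=
    (mul_le_mul_of_nonneg_left hε' n.cast_nonneg).trans (by simpa using mul_inv_le_one)
  refine le_csInf ⟨1, 1, fun _ => one_pos, by simp, by simp [mulVec, dotProduct, hrow]⟩ ?_
  rintro _ ⟨x, hx, hprod, rfl⟩
  exact pow_le_prod_mulVec hpos hrow (Real.sqrt_nonneg _) (Real.sqrt_le_one.2 hnε)
    (fun S => by simpa using card_sub_sqrt_le_sum hcol S) hx hprod

theorem cap_almost_doubly_stochastic (n : ℕ) (ε : ℝ) (hε : 0 ≤ ε) (hε' : ε ≤ 1 / n)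
    (A : Matrix (Fin n) (Fin n) ℝ)
    (hpos : ∀ i j, 0 ≤ A i j)
    (hrow : ∀ i, ∑ j, A i j = 1)
    (hcol : ∑ j, ((∑ i, A i j) - 1) ^ 2 ≤ ε) :
    (1 - Real.sqrt (n * ε)) ^ n ≤ matrixCap A :=
  cap_almost_doubly_stochastic_general n ε hε' A hpos hrow hcol
end

section
/- Let T be a completely positive operator with Kraus operators A_1,...,A_m ∈ M_n(ℂ) and let c ≥ 1. Then T is c-rank-decreasing (there exists X ⪰ 0 with rank(T(X)) ≤ rank(X) - c) if and only if A_1,...,A_m admit a c-shrunk subspace (there exist subspaces V, W ⊆ ℂ^n with dim W ≤ dim V - c and A_i(V) ⊆ W for all i). -/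
/-!
Writing a positive semidefinite `X` as `B Bᴴ`, each `Aᵢ X Aᵢᴴ` is `(Aᵢ B)(Aᵢ B)ᴴ`. The range of
`∑ Mᵢ Mᵢᴴ` is the sum of the ranges of the `Mᵢ`, because that sum is `D Dᴴ` for the block row
`D = [M₁ ⋯ Mₘ]` and `D Dᴴ` has the same range as `D`. Hence the range of `T(X)` is `∑ Aᵢ(range X)`:
a rank-decreasing `X` yields the shrunk pair `(range X, range T(X))`, and conversely for a shrunk
pair `(V, W)` any positive semidefinite `X` with range `V` satisfies `range T(X) ≤ W`.
-/

open Matrix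
open scoped ComplexOrder

namespace Matrix

section StarOrderedField

variable {R m p ι : Type*} [Field R] [PartialOrder R] [StarRing R] [StarOrderedRing R]
  [Fintype m] [Fintype p] [Fintype ι]

theorem range_mulVecLin_mul_conjTranspose_self (M : Matrix m p R) :
    LinearMap.range (M * Mᴴ).mulVecLin = LinearMap.range M.mulVecLin := by
  refine Submodule.eq_of_le_of_finrank_le ?_ (rank_self_mul_conjTranspose M).ge
  rw [mulVecLin_mul]
  exact LinearMap.range_comp_le_range _ _

theorem range_mulVecLin_sum_mul_conjTranspose_self (M : ι → Matrix m p R) :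
    LinearMap.range (∑ i, M i * (M i)ᴴ).mulVecLin = ⨆ i, LinearMap.range (M i).mulVecLin := by
  set D : Matrix m (ι × p) R := of fun j q => M q.1 j q.2
  have hD : D * Dᴴ = ∑ i, M i * (M i)ᴴ := by
    ext a b
    simp only [D, mul_apply, conjTranspose_apply, of_apply, sum_apply, Fintype.sum_prod_type]
  have hcol : Set.range D.col = ⋃ i, Set.range (M i).col := by
    ext v
    simp only [Set.mem_iUnion, Set.mem_range, Prod.exists]
    rfl
  rw [← hD, range_mulVecLin_mul_conjTranspose_self, range_mulVecLin, hcol, Submodule.span_iUnion]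
  simp only [range_mulVecLin]

theorem exists_posSemidef_range_mulVecLin_eq (V : Submodule R (m → R)) :
    ∃ X : Matrix m m R, X.PosSemidef ∧ LinearMap.range X.mulVecLin = V := by
  let b := Module.finBasis R V
  let B : Matrix m (Fin (Module.finrank R V)) R := of fun i j => (b j : m → R) i
  refine ⟨B * Bᴴ, posSemidef_self_mul_conjTranspose B, ?_⟩
  have hcol : Set.range B.col = V.subtype '' Set.range b := by
    rw [← Set.range_comp]; rfl
  rw [range_mulVecLin_mul_conjTranspose_self, range_mulVecLin, hcol, ← Submodule.map_span,
    b.span_eq, Submodule.map_top, Submodule.range_subtype]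

end StarOrderedField

section RCLike

variable {𝕜 m n ι : Type*} [RCLike 𝕜] [Fintype m] [Fintype n] [Fintype ι]

theorem PosSemidef.exists_eq_mul_conjTranspose_self [DecidableEq n] {X : Matrix n n 𝕜} (hX : X.PosSemidef) :
    ∃ B : Matrix n n 𝕜, X = B * Bᴴ := by
  open scoped MatrixOrder in
  exact ⟨CFC.sqrt X, by
    rw [(CFC.sqrt_nonneg X).posSemidef.isHermitian.eq, CFC.sqrt_mul_sqrt_self X hX.nonneg]⟩

theorem PosSemidef.range_mulVecLin_sum_mul_mul_conjTranspose {X : Matrix n n 𝕜}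
    (hX : X.PosSemidef) (A : ι → Matrix m n 𝕜) :
    LinearMap.range (∑ i, A i * X * (A i)ᴴ).mulVecLin =
      ⨆ i, (LinearMap.range X.mulVecLin).map (A i).mulVecLin := by
  classical
  obtain ⟨B, rfl⟩ := hX.exists_eq_mul_conjTranspose_self
  have hfactor : ∀ i, A i * (B * Bᴴ) * (A i)ᴴ = (A i * B) * (A i * B)ᴴ := fun i => by
    simp only [conjTranspose_mul, Matrix.mul_assoc]
  rw [range_mulVecLin_mul_conjTranspose_self]
  simp only [hfactor, range_mulVecLin_sum_mul_conjTranspose_self, mulVecLin_mul,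
    LinearMap.range_comp]

end RCLike

end Matrix

theorem c_rank_decreasing_iff_c_shrunk_subspace_general (n m c : ℕ)
    (A : Fin m → Matrix (Fin n) (Fin n) ℂ) :
    (∃ X : Matrix (Fin n) (Fin n) ℂ, X.PosSemidef ∧
        (∑ i, A i * X * (A i)ᴴ).rank + c ≤ X.rank) ↔
      (∃ V W : Submodule ℂ (Fin n → ℂ),
        Module.finrank ℂ W + c ≤ Module.finrank ℂ V ∧
        ∀ i, V.map (A i).mulVecLin ≤ W) := by
  constructor
  · rintro ⟨X, hX, hrank⟩
    refine ⟨LinearMap.range X.mulVecLin, LinearMap.range (∑ i, A i * X * (A i)ᴴ).mulVecLin,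
      hrank, fun i => ?_⟩
    rw [hX.range_mulVecLin_sum_mul_mul_conjTranspose]
    exact le_iSup (fun i => (LinearMap.range X.mulVecLin).map (A i).mulVecLin) i
  · rintro ⟨V, W, hVW, hmap⟩
    obtain ⟨X, hX, rfl⟩ := exists_posSemidef_range_mulVecLin_eq V
    have hW : LinearMap.range (∑ i, A i * X * (A i)ᴴ).mulVecLin ≤ W := by
      rw [hX.range_mulVecLin_sum_mul_mul_conjTranspose]
      exact iSup_le hmap
    exact ⟨X, hX, (Nat.add_le_add_right (Submodule.finrank_mono hW) c).trans hVW⟩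

theorem c_rank_decreasing_iff_c_shrunk_subspace (n m c : ℕ) (hc : 1 ≤ c)
    (A : Fin m → Matrix (Fin n) (Fin n) ℂ) :
    (∃ X : Matrix (Fin n) (Fin n) ℂ, X.PosSemidef ∧
        (∑ i, A i * X * (A i)ᴴ).rank + c ≤ X.rank) ↔
      (∃ V W : Submodule ℂ (Fin n → ℂ),
        Module.finrank ℂ W + c ≤ Module.finrank ℂ V ∧
        ∀ i, V.map (A i).mulVecLin ≤ W) :=
  c_rank_decreasing_iff_c_shrunk_subspace_general n m c A
end

section
/- Let T be a completely positive operator whose Kraus operators A_1,...,A_m are n × n integer matrices with entries of absolute value at most M, and suppose T(I) and T*(I) are both nonsingular. Then (M²n²m)·I ⪰ T(I) ⪰ (M²n²m)^{-(n-1)}·I, and the same bounds hold for T*(I). -/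
open Matrix
open scoped ComplexOrder

/-!
`T(I)` is the image in `M_n(ℂ)` of the positive semidefinite integer matrix `Q = ∑ Aᵢ Aᵢᵀ`.
Every eigenvalue of `Q` is at most `tr Q = ∑ᵢₖₗ Aᵢ(k,l)² ≤ M²n²m =: c`. The product of the
eigenvalues is `det Q`, a nonzero nonnegative integer, hence at least `1`; dividing by the
other `n - 1` eigenvalues, each at most `c`, bounds every eigenvalue below by `c^{-(n-1)}`.
`T*(I)` is `T(I)` for the Kraus operators `Aᵢᵀ`.
-/

lemma inv_pow_le_of_one_le_prod {ι K : Type*} [Fintype ι] [Field K] [LinearOrder K]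
    [IsStrictOrderedRing K] {μ : ι → K} {c : K} (h0 : ∀ i, 0 ≤ μ i) (hc : ∀ i, μ i ≤ c)
    (h1 : 1 ≤ ∏ i, μ i) (j : ι) : (c ^ (Fintype.card ι - 1))⁻¹ ≤ μ j := by
  classical
  have hrest : ∏ i ∈ Finset.univ.erase j, μ i ≤ c ^ (Fintype.card ι - 1) := by
    calc ∏ i ∈ Finset.univ.erase j, μ i ≤ ∏ _i ∈ Finset.univ.erase j, c :=
          Finset.prod_le_prod (fun i _ => h0 i) (fun i _ => hc i)
      _ = c ^ (Fintype.card ι - 1) := by simp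
  have hmul : 1 ≤ μ j * c ^ (Fintype.card ι - 1) := by
    calc 1 ≤ ∏ i, μ i := h1
      _ = μ j * ∏ i ∈ Finset.univ.erase j, μ i :=
          (Finset.mul_prod_erase _ μ (Finset.mem_univ j)).symm
      _ ≤ μ j * c ^ (Fintype.card ι - 1) := mul_le_mul_of_nonneg_left hrest (h0 j)
  have hpow : 0 < c ^ (Fintype.card ι - 1) :=
    pos_of_mul_pos_right (one_pos.trans_le hmul) (h0 j)
  rwa [inv_le_iff_one_le_mul₀ hpow]

namespace Matrix

section Spectral

variable {ι 𝕜 : Type*} [Fintype ι] [DecidableEq ι] [RCLike 𝕜] {A : Matrix ι ι 𝕜}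

open scoped MatrixOrder in
lemma IsHermitian.posSemidef_smul_one_sub_iff (hA : A.IsHermitian) (a : ℝ) :
    (a • 1 - A).PosSemidef ↔ ∀ i, hA.eigenvalues i ≤ a := by
  rw [← le_iff, ← Algebra.algebraMap_eq_smul_one,
    le_algebraMap_iff_spectrum_le hA.isSelfAdjoint, hA.spectrum_real_eq_range_eigenvalues]
  simp

open scoped MatrixOrder in
lemma IsHermitian.posSemidef_sub_smul_one_iff (hA : A.IsHermitian) (a : ℝ) :
    (A - a • 1).PosSemidef ↔ ∀ i, a ≤ hA.eigenvalues i := by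
  rw [← le_iff, ← Algebra.algebraMap_eq_smul_one,
    algebraMap_le_iff_le_spectrum hA.isSelfAdjoint, hA.spectrum_real_eq_range_eigenvalues]
  simp

lemma PosSemidef.eigenvalues_le_re_trace (hA : A.PosSemidef) (i : ι) :
    hA.1.eigenvalues i ≤ RCLike.re A.trace := by
  rw [hA.1.trace_eq_sum_eigenvalues, map_sum]
  simp only [RCLike.ofReal_re]
  exact Finset.single_le_sum (fun j _ => hA.eigenvalues_nonneg j) (Finset.mem_univ i)

lemma PosSemidef.one_le_prod_eigenvalues_of_intCast {Q : Matrix ι ι ℤ}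
    (hQ : (Q.map (Int.cast : ℤ → 𝕜)).PosSemidef) (hdet : (Q.map (Int.cast : ℤ → 𝕜)).det ≠ 0) :
    1 ≤ ∏ i, hQ.1.eigenvalues i := by
  have hprod : ∏ i, hQ.1.eigenvalues i = Q.det := by
    apply (RCLike.ofReal_injective (K := 𝕜))
    rw [RCLike.ofReal_prod, ← hQ.1.det_eq_prod_eigenvalues, RCLike.ofReal_intCast]
    exact ((Int.castRingHom 𝕜).map_det Q).symm
  have hpos : 0 < Q.det := by
    refine lt_of_le_of_ne ?_ (Ne.symm fun h => hdet ?_)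
    · exact_mod_cast hprod ▸ Finset.prod_nonneg fun i _ => hQ.eigenvalues_nonneg i
    · simpa [h] using ((Int.castRingHom 𝕜).map_det Q).symm
  rw [hprod]
  exact_mod_cast hpos

end Spectral

lemma trace_mul_transpose_le {m n R : Type*} [Fintype m] [Fintype n] [CommRing R]
    [LinearOrder R] [IsStrictOrderedRing R] (A : Matrix m n R) {M : R}
    (hA : ∀ i j, |A i j| ≤ M) :
    (A * Aᵀ).trace ≤ Fintype.card m * Fintype.card n * M ^ 2 := by
  calc (A * Aᵀ).trace = ∑ i, ∑ j, A i j ^ 2 := by simp [trace, mul_apply, sq]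
    _ ≤ ∑ _i : m, ∑ _j : n, M ^ 2 := by
        refine Finset.sum_le_sum fun i _ => Finset.sum_le_sum fun j _ => ?_
        simpa only [sq_abs] using pow_le_pow_left₀ (abs_nonneg _) (hA i j) 2
    _ = Fintype.card m * Fintype.card n * M ^ 2 := by simp [mul_assoc]

lemma conjTranspose_map_intCast {m n 𝕜 : Type*} [RCLike 𝕜] (A : Matrix m n ℤ) :
    (A.map (Int.cast : ℤ → 𝕜))ᴴ = Aᵀ.map Int.cast := by
  ext i j; simp

lemma sum_map_intCast_mul_conjTranspose {ι κ 𝕜 : Type*} [Fintype ι] [Fintype κ] [RCLike 𝕜]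
    (A : κ → Matrix ι ι ℤ) :
    ∑ k, (A k).map (Int.cast : ℤ → 𝕜) * ((A k).map Int.cast)ᴴ =
      (∑ k, A k * (A k)ᵀ).map Int.cast := by
  ext i j
  simp [sum_apply, mul_apply]

theorem loewner_bounds_sum_map_intCast_mul_conjTranspose {ι κ 𝕜 : Type*} [Fintype ι]
    [DecidableEq ι] [Fintype κ] [RCLike 𝕜] (A : κ → Matrix ι ι ℤ) {M : ℕ}
    (hA : ∀ k i j, |A k i j| ≤ M)
    (hdet : (∑ k, (A k).map (Int.cast : ℤ → 𝕜) * ((A k).map Int.cast)ᴴ).det ≠ 0) :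
    (((M : ℝ) ^ 2 * Fintype.card ι ^ 2 * Fintype.card κ) • (1 : Matrix ι ι 𝕜) -
        ∑ k, (A k).map (Int.cast : ℤ → 𝕜) * ((A k).map Int.cast)ᴴ).PosSemidef ∧
    ((∑ k, (A k).map (Int.cast : ℤ → 𝕜) * ((A k).map Int.cast)ᴴ) -
        (((M : ℝ) ^ 2 * Fintype.card ι ^ 2 * Fintype.card κ) ^ (Fintype.card ι - 1))⁻¹ •
          (1 : Matrix ι ι 𝕜)).PosSemidef := by
  set c : ℝ := (M : ℝ) ^ 2 * Fintype.card ι ^ 2 * Fintype.card κ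
  have hT := posSemidef_sum Finset.univ fun k _ =>
    posSemidef_self_mul_conjTranspose ((A k).map (Int.cast : ℤ → 𝕜))
  rw [sum_map_intCast_mul_conjTranspose] at hdet hT ⊢
  set Q := ∑ k, A k * (A k)ᵀ
  have htrace : RCLike.re (Q.map (Int.cast : ℤ → 𝕜)).trace ≤ c := by
    have h := Finset.sum_le_sum fun k (_ : k ∈ Finset.univ) =>
      (A k).trace_mul_transpose_le (hA k)
    rw [← trace_sum, Finset.sum_const, Finset.card_univ, nsmul_eq_mul] at h
    calc RCLike.re (Q.map (Int.cast : ℤ → 𝕜)).trace = (Q.trace : ℝ) := by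
          simpa using congrArg RCLike.re (AddMonoidHom.map_trace (Int.castRingHom 𝕜) Q).symm
      _ ≤ ((Fintype.card κ * (Fintype.card ι * Fintype.card ι * (M : ℤ) ^ 2) : ℤ) : ℝ) := by
          exact_mod_cast h
      _ = c := by push_cast; ring
  have hle : ∀ i, hT.1.eigenvalues i ≤ c := fun i => (hT.eigenvalues_le_re_trace i).trans htrace
  have hge := inv_pow_le_of_one_le_prod hT.eigenvalues_nonneg hle
    (hT.one_le_prod_eigenvalues_of_intCast hdet)
  exact ⟨(hT.1.posSemidef_smul_one_sub_iff c).2 hle, (hT.1.posSemidef_sub_smul_one_iff _).2 hge⟩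

end Matrix

theorem operator_identity_loewner_bounds (n m M : ℕ)
    (A : Fin m → Matrix (Fin n) (Fin n) ℤ)
    (hbd : ∀ i k l, |A i k l| ≤ (M : ℤ))
    (h1 : (∑ i, (A i).map (Int.cast : ℤ → ℂ) * ((A i).map (Int.cast : ℤ → ℂ))ᴴ).det ≠ 0)
    (h2 : (∑ i, ((A i).map (Int.cast : ℤ → ℂ))ᴴ * (A i).map (Int.cast : ℤ → ℂ)).det ≠ 0) :
    (((M : ℝ) ^ 2 * n ^ 2 * m) • (1 : Matrix (Fin n) (Fin n) ℂ) -
        ∑ i, (A i).map (Int.cast : ℤ → ℂ) * ((A i).map (Int.cast : ℤ → ℂ))ᴴ).PosSemidef ∧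
    ((∑ i, (A i).map (Int.cast : ℤ → ℂ) * ((A i).map (Int.cast : ℤ → ℂ))ᴴ) -
        ((((M : ℝ) ^ 2 * n ^ 2 * m) ^ (n - 1))⁻¹ • (1 : Matrix (Fin n) (Fin n) ℂ))).PosSemidef ∧
    (((M : ℝ) ^ 2 * n ^ 2 * m) • (1 : Matrix (Fin n) (Fin n) ℂ) -
        ∑ i, ((A i).map (Int.cast : ℤ → ℂ))ᴴ * (A i).map (Int.cast : ℤ → ℂ)).PosSemidef ∧
    ((∑ i, ((A i).map (Int.cast : ℤ → ℂ))ᴴ * (A i).map (Int.cast : ℤ → ℂ)) -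
        ((((M : ℝ) ^ 2 * n ^ 2 * m) ^ (n - 1))⁻¹ • (1 : Matrix (Fin n) (Fin n) ℂ))).PosSemidef := by
  have hdual : ∑ i, ((A i).map (Int.cast : ℤ → ℂ))ᴴ * (A i).map Int.cast =
      ∑ i, ((A i)ᵀ).map (Int.cast : ℤ → ℂ) * (((A i)ᵀ).map Int.cast)ᴴ := by
    simp only [conjTranspose_map_intCast, transpose_transpose]
  have hT := loewner_bounds_sum_map_intCast_mul_conjTranspose A hbd h1
  have hTdual := loewner_bounds_sum_map_intCast_mul_conjTranspose (fun i => (A i)ᵀ)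
    (fun i k l => hbd i l k) (hdual ▸ h2)
  simp only [Fintype.card_fin] at hT hTdual
  rw [hdual]
  exact ⟨hT.1, hT.2, hTdual.1, hTdual.2⟩
end

section
/- Let p ∈ ℂ[x_1,...,x_n] be a nonzero polynomial of total degree d such that the degree in each variable x_i is at most d_i. Then there exists a point (a_1,...,a_n) with nonnegative integer coordinates, ∑ a_i ≤ d and a_i ≤ d_i for each i, at which p does not vanish. -/
open MvPolynomial

lemma key_nonzero_point : ∀ (n : ℕ) (p : MvPolynomial (Fin n) ℂ), p ≠ 0 →
    ∃ a : Fin n → ℕ, (∑ i, a i ≤ p.totalDegree) ∧ (∀ i, a i ≤ p.degreeOf i) ∧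
      MvPolynomial.eval (fun i => (a i : ℂ)) p ≠ 0 := by
  intro n
  induction n with
  | zero =>
    intro p hp
    obtain ⟨c, rfl⟩ := C_surjective (Fin 0) p
    exact ⟨fun _ => 0, by simp, fun i => i.elim0, by
      simpa using fun h => hp (by rw [h, map_zero])⟩
  | succ n ih =>
    intro p hp
    set P := finSuccEquiv ℂ n p with hPdef
    have hP : P ≠ 0 := by
      simp only [hPdef, ne_eq, EmbeddingLike.map_eq_zero_iff]
      exact hp
    set k := P.natDegree with hk
    have hc : P.coeff k ≠ 0 := by
      rw [hk, ← Polynomial.leadingCoeff]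
      exact Polynomial.leadingCoeff_ne_zero.mpr hP
    obtain ⟨a', hsum, hdeg, heval⟩ := ih (P.coeff k) hc
    set q := Polynomial.map (MvPolynomial.eval fun i => (a' i : ℂ)) P with hq
    have hqk : q.coeff k ≠ 0 := by
      rwa [hq, Polynomial.coeff_map]
    have hqdeg : q.natDegree ≤ k := Polynomial.natDegree_map_le
    -- find y ≤ k with q.eval y ≠ 0
    have : ∃ y : ℕ, y ≤ k ∧ q.eval (y : ℂ) ≠ 0 := by
      by_contra h
      push_neg at h
      have hq0 : q = 0 := by
        apply Polynomial.eq_zero_of_natDegree_lt_card_of_eval_eq_zero q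
          (f := fun i : Fin (k+1) => ((i : ℕ) : ℂ))
          (fun i j hij => Fin.val_injective (Nat.cast_injective hij))
          (fun i => h i (Nat.lt_succ_iff.mp i.isLt))
        simpa using Nat.lt_succ_of_le hqdeg
      exact hqk (by simp [hq0])
    obtain ⟨y, hy, hyq⟩ := this
    refine ⟨Fin.cons y a', ?_, ?_, ?_⟩
    · rw [Fin.sum_cons]
      calc y + ∑ i, a' i ≤ k + (P.coeff k).totalDegree := add_le_add hy hsum
        _ = (P.coeff k).totalDegree + k := add_comm _ _
        _ ≤ p.totalDegree := totalDegree_coeff_finSuccEquiv_add_le p k hc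
    · intro i
      induction i using Fin.cases with
      | zero => ?_
      | succ j => ?_
      · simpa using hy.trans_eq (natDegree_finSuccEquiv p)
      · simpa using (hdeg j).trans (degreeOf_coeff_finSuccEquiv p j k)
    · have hfun : (fun i => (((Fin.cons y a' : Fin (n+1) → ℕ) i : ℕ) : ℂ)) =
          Fin.cons (y : ℂ) (fun i => (a' i : ℂ)) := by
        funext i
        induction i using Fin.cases <;> simp
      rw [hfun, eval_eq_eval_mv_eval']
      exact hyq

theorem exists_nonneg_integer_point_of_nonzero_polynomial (n d : ℕ) (di : Fin n → ℕ)
    (p : MvPolynomial (Fin n) ℂ) (hp : p ≠ 0)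
    (hd : p.totalDegree = d) (hdi : ∀ i, p.degreeOf i ≤ di i) :
    ∃ a : Fin n → ℕ, (∑ i, a i ≤ d) ∧ (∀ i, a i ≤ di i) ∧
      MvPolynomial.eval (fun i => (a i : ℂ)) p ≠ 0 := by
  obtain ⟨a, h1, h2, h3⟩ := key_nonzero_point n p hp
  exact ⟨a, hd ▸ h1, fun i => (h2 i).trans (hdi i), h3⟩
end
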